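/- arXiv:2401.10204 — 5 statements merged into one kernel-verified Lean document; each statement's English description precedes it below -/
import Mathlib

section
/- Let 𝒴 be a nonempty finite alphabet and let η ∈ (0, 1/(2|𝒴|)). Then for every probability distribution P on 𝒴 there exists Q ∈ 𝒫_η(𝒴) such that D(P‖Q) ≤ 2η|𝒴|; in particular, the minimum of D(P‖Q) over Q ∈ 𝒫_η(𝒴) is at most 2η|𝒴|. -/
/-- A probability distribution on a finite alphabet. -/
def IsDist {𝒴 : Type*} [Fintype 𝒴] (P : 𝒴 → ℝ) : Prop :=
  (∀ y, 0 ≤ P y) ∧ ∑ y, P y = 1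

/-- The Kullback–Leibler divergence (real-valued formula; the convention
`0 · log (0/q) = 0` is automatic in Lean since `Real.log` and multiplication
handle it, and here `Q` is bounded below by `η > 0`). -/
noncomputable def klR {𝒴 : Type*} [Fintype 𝒴] (P Q : 𝒴 → ℝ) : ℝ :=
  ∑ y, P y * Real.log (P y / Q y)

/-- KL nonnegativity (easy direction via `log x ≤ x - 1`). -/
lemma klR_nonneg {𝒴 : Type*} [Fintype 𝒴] (P Q : 𝒴 → ℝ) (hP : IsDist P)
    (hQ : IsDist Q) (hQpos : ∀ y, 0 < Q y) : 0 ≤ klR P Q := by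
  have key : ∀ y, P y - Q y ≤ P y * Real.log (P y / Q y) := by
    intro y
    rcases eq_or_lt_of_le (hP.1 y) with h0 | hpos
    · simp [← h0]
      exact (hQ.1 y)
    · have hq := hQpos y
      have h1 : Real.log (Q y / P y) ≤ Q y / P y - 1 :=
        Real.log_le_sub_one_of_pos (div_pos hq hpos)
      have h2 : 1 - Q y / P y ≤ Real.log (P y / Q y) := by
        rw [Real.log_div hpos.ne' hq.ne'] at *
        rw [Real.log_div hq.ne' hpos.ne'] at h1
        linarith
      have := mul_le_mul_of_nonneg_left h2 hpos.le
      calc P y - Q y = P y * (1 - Q y / P y) := by field_simp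
        _ ≤ P y * Real.log (P y / Q y) := this
  calc (0:ℝ) = ∑ y, (P y - Q y) := by
        rw [Finset.sum_sub_distrib, hP.2, hQ.2]; ring
    _ ≤ klR P Q := Finset.sum_le_sum fun y _ => key y

/-- for η ∈ (0, 1/(2|𝒴|)) and any distribution P on 𝒴 there is
`Q ∈ 𝒫_η(𝒴)` with `D(P‖Q) ≤ 2η|𝒴|`; in particular the infimum of `D(P‖Q)` over
`Q ∈ 𝒫_η(𝒴)` is at most `2η|𝒴|`. -/
theorem stmt_0 {𝒴 : Type*} [Fintype 𝒴] [Nonempty 𝒴]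
    (η : ℝ) (hη : 0 < η) (hη' : η < 1 / (2 * Fintype.card 𝒴))
    (P : 𝒴 → ℝ) (hP : IsDist P) :
    (∃ Q : 𝒴 → ℝ, (IsDist Q ∧ ∀ y, η ≤ Q y) ∧
        klR P Q ≤ 2 * η * Fintype.card 𝒴) ∧
      sInf {d : ℝ | ∃ Q : 𝒴 → ℝ, (IsDist Q ∧ ∀ y, η ≤ Q y) ∧ d = klR P Q}
        ≤ 2 * η * Fintype.card 𝒴 := by
  set N : ℝ := (Fintype.card 𝒴 : ℝ) with hN
  have hNpos : (0:ℝ) < N := by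
    simpa [hN] using (Nat.cast_pos.mpr Fintype.card_pos : (0:ℝ) < Fintype.card 𝒴)
  have hx : η * N < 1 / 2 := by
    have h2N : (0:ℝ) < 2 * N := by linarith
    rw [lt_div_iff₀ h2N] at hη'
    linarith
  have hxpos : 0 < η * N := mul_pos hη hNpos
  set c : ℝ := 1 - η * N with hc
  have hcpos : 0 < c := by simp only [hc]; linarith
  set Q : 𝒴 → ℝ := fun y => c * P y + η with hQdef
  have hQdist : IsDist Q := by
    constructor
    · intro y
      have := hP.1 y
      have : 0 ≤ c * P y := mul_nonneg hcpos.le this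
      simp only [hQdef]; linarith
    · simp only [hQdef]
      rw [Finset.sum_add_distrib, ← Finset.mul_sum, hP.2]
      simp [hc, hN, Finset.card_univ]
      ring
  have hQη : ∀ y, η ≤ Q y := fun y => by
    have : 0 ≤ c * P y := mul_nonneg hcpos.le (hP.1 y)
    simp only [hQdef]; linarith
  have hQpos : ∀ y, 0 < Q y := fun y => lt_of_lt_of_le hη (hQη y)
  -- log bound: -log c ≤ 2 η N
  have hlog : -Real.log c ≤ 2 * η * N := by
    have h1 : Real.exp (-(2 * η * N)) ≤ c := by
      -- exp(-2x) ≤ 1/(1+2x) ≤ 1 - x for x ≤ 1/2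
      have h3 : Real.exp (2 * η * N) * Real.exp (-(2 * η * N)) = 1 := by
        rw [← Real.exp_add]; ring_nf; exact Real.exp_zero
      have h4 : (1 : ℝ) + 2 * η * N ≤ Real.exp (2 * η * N) := by
        linarith [Real.add_one_le_exp (2 * η * N)]
      have h5 : Real.exp (-(2 * η * N)) ≤ 1 / (1 + 2 * η * N) := by
        rw [le_div_iff₀ (by linarith)]
        nlinarith [Real.exp_pos (-(2 * η * N))]
      have h6 : 1 / (1 + 2 * η * N) ≤ c := by
        rw [div_le_iff₀ (by linarith)]
        simp only [hc]
        nlinarith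
      linarith
    have := Real.log_le_log (Real.exp_pos _) h1
    rw [Real.log_exp] at this
    linarith
  have hkl : klR P Q ≤ 2 * η * N := by
    have key : ∀ y, P y * Real.log (P y / Q y) ≤ P y * (-Real.log c) := by
      intro y
      rcases eq_or_lt_of_le (hP.1 y) with h0 | hpos
      · simp [← h0]
      · have hq := hQpos y
        have hratio : P y / Q y ≤ 1 / c := by
          rw [div_le_div_iff₀ hq hcpos]
          have : c * P y ≤ Q y := by simp only [hQdef]; linarith
          nlinarith
        have hlogr : Real.log (P y / Q y) ≤ -Real.log c := by
          have := Real.log_le_log (div_pos hpos hq) hratio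
          rwa [Real.log_div one_ne_zero hcpos.ne', Real.log_one, zero_sub] at this
        exact mul_le_mul_of_nonneg_left hlogr hpos.le
    calc klR P Q ≤ ∑ y, P y * (-Real.log c) := Finset.sum_le_sum fun y _ => key y
      _ = -Real.log c := by rw [← Finset.sum_mul, hP.2, one_mul]
      _ ≤ 2 * η * N := hlog
  refine ⟨⟨Q, ⟨hQdist, hQη⟩, hkl⟩, ?_⟩
  have hmem : klR P Q ∈ {d : ℝ | ∃ Q' : 𝒴 → ℝ, (IsDist Q' ∧ ∀ y, η ≤ Q' y) ∧ d = klR P Q'} :=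
    ⟨Q, ⟨hQdist, hQη⟩, rfl⟩
  have hbdd : BddBelow {d : ℝ | ∃ Q' : 𝒴 → ℝ, (IsDist Q' ∧ ∀ y, η ≤ Q' y) ∧ d = klR P Q'} := by
    refine ⟨0, fun d hd => ?_⟩
    obtain ⟨Q', ⟨hQ'd, hQ'η⟩, rfl⟩ := hd
    exact klR_nonneg P Q' hP hQ'd fun y => lt_of_lt_of_le hη (hQ'η y)
  exact le_trans (csInf_le hbdd hmem) hkl
end

section
/- Let 𝒳, 𝒴 be nonempty finite alphabets, W a discrete memoryless channel from 𝒳 to 𝒴, and η ∈ (0, 1/(2|𝒴|)). Then 0 ≤ C_η(W) − C(W) ≤ 2η|𝒴|, where C(W) is the capacity (in its dual minimax form) and C_η(W) the pseudo-capacity. -/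
/-- The Kullback–Leibler divergence, valued in `EReal`: it equals the real sum
`∑ y, P y * log (P y / Q y)` (with the convention `0 · log (0/q) = 0`, automatic
in Lean) when `P ≪ Q`, and `+∞` if `P y > 0 = Q y` for some `y`. -/
noncomputable def klE {𝒴 : Type*} [Fintype 𝒴] (P Q : 𝒴 → ℝ) : EReal :=
  if ∀ y, Q y = 0 → P y = 0 then ((∑ y, P y * Real.log (P y / Q y) : ℝ) : EReal) else ⊤

/-- The capacity of a DMC in the Csiszár–Kemperman dual (minimax) form:
`C(W) = min_{Q ∈ 𝒫(𝒴)} max_{x ∈ 𝒳} D(W(·|x) ‖ Q)`. -/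
noncomputable def capE {𝒳 𝒴 : Type*} [Fintype 𝒳] [Fintype 𝒴] (W : 𝒳 → 𝒴 → ℝ) : EReal :=
  ⨅ (Q : 𝒴 → ℝ) (_ : IsDist Q), ⨆ x : 𝒳, klE (W x) Q

/-- The pseudo-capacity `C_η(W) = min_{Q ∈ 𝒫_η(𝒴)} max_{x ∈ 𝒳} D(W(·|x) ‖ Q)`. -/
noncomputable def pseudoCapE {𝒳 𝒴 : Type*} [Fintype 𝒳] [Fintype 𝒴]
    (η : ℝ) (W : 𝒳 → 𝒴 → ℝ) : EReal :=
  ⨅ (Q : 𝒴 → ℝ) (_ : IsDist Q ∧ ∀ y, η ≤ Q y), ⨆ x : 𝒳, klE (W x) Q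

/-!
Any `Q ∈ 𝒫(𝒴)` can be pushed into `𝒫_η(𝒴)` by mixing it with the uniform distribution:
`Q' = (1 - η|𝒴|) Q + η|𝒴| · Unif` satisfies `Q' ≥ η` and `Q' ≥ (1 - η|𝒴|) Q`. The second bound
gives `D(P‖Q') ≤ D(P‖Q) - log (1 - η|𝒴|)` for every `P`, and `-log (1 - t) ≤ 2t` for
`t ≤ 1/2`. Taking the maximum over inputs and then the infimum over `Q` gives the upper
bound; the lower bound holds because `C_η` minimises over a smaller set.
-/

open Real

lemma Real.neg_log_one_sub_le {t : ℝ} (ht₀ : 0 ≤ t) (ht : t ≤ 1 / 2) :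
    -log (1 - t) ≤ 2 * t := by
  have hpos : 0 < 1 - t := by linarith
  have hinv : (1 - t)⁻¹ ≤ 1 + 2 * t := by
    rw [inv_le_iff_one_le_mul₀ hpos]
    nlinarith
  linarith [one_sub_inv_le_log_of_pos hpos]

section Divergence

variable {𝒴 : Type*} [Fintype 𝒴]

lemma klE_le_add_neg_log_of_mul_le {P Q Q' : 𝒴 → ℝ} {c : ℝ} (hP : IsDist P)
    (hQ : ∀ y, 0 ≤ Q y) (hc : 0 < c) (hQQ' : ∀ y, c * Q y ≤ Q' y) :
    klE P Q' ≤ klE P Q + ((-log c : ℝ) : EReal) := by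
  by_cases hac : ∀ y, Q y = 0 → P y = 0
  swap
  · simp [klE, if_neg hac]
  have hQ_pos {y} (hPy : 0 < P y) : 0 < Q y :=
    (hQ y).lt_of_ne fun h => hPy.ne' (hac y h.symm)
  have hac' : ∀ y, Q' y = 0 → P y = 0 := fun y hQ'y =>
    ((hP.1 y).lt_or_eq.resolve_left fun hPy =>
      (mul_pos hc (hQ_pos hPy)).not_ge (hQ'y ▸ hQQ' y)).symm
  rw [klE, if_pos hac', klE, if_pos hac, ← EReal.coe_add, EReal.coe_le_coe_iff]
  have hterm : ∀ y, P y * log (P y / Q' y) ≤ P y * log (P y / Q y) + P y * -log c := by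
    intro y
    rcases (hP.1 y).eq_or_lt with hPy | hPy
    · simp [← hPy]
    have hcQ : 0 < c * Q y := mul_pos hc (hQ_pos hPy)
    have hlog : log c + log (Q y) ≤ log (Q' y) := by
      rw [← log_mul hc.ne' (hQ_pos hPy).ne']
      exact log_le_log hcQ (hQQ' y)
    rw [← mul_add]
    refine mul_le_mul_of_nonneg_left ?_ hPy.le
    rw [log_div hPy.ne' (hcQ.trans_le (hQQ' y)).ne', log_div hPy.ne' (hQ_pos hPy).ne']
    linarith
  calc ∑ y, P y * log (P y / Q' y)
      ≤ ∑ y, (P y * log (P y / Q y) + P y * -log c) := Finset.sum_le_sum fun y _ => hterm y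
    _ = ∑ y, P y * log (P y / Q y) + -log c := by
      rw [Finset.sum_add_distrib, ← Finset.sum_mul, hP.2, one_mul]

noncomputable def mixUniform (η : ℝ) (Q : 𝒴 → ℝ) : 𝒴 → ℝ :=
  fun y => (1 - η * Fintype.card 𝒴) * Q y + η

variable {η : ℝ} {Q : 𝒴 → ℝ}

lemma mul_le_mixUniform (hη : 0 ≤ η) (y : 𝒴) :
    (1 - η * Fintype.card 𝒴) * Q y ≤ mixUniform η Q y :=
  le_add_of_nonneg_right hη

lemma le_mixUniform (hQ : IsDist Q) (hη : η * Fintype.card 𝒴 ≤ 1) (y : 𝒴) :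
    η ≤ mixUniform η Q y :=
  le_add_of_nonneg_left (mul_nonneg (sub_nonneg.mpr hη) (hQ.1 y))

lemma IsDist.mixUniform (hQ : IsDist Q) (hη : 0 ≤ η) (hη₁ : η * Fintype.card 𝒴 ≤ 1) :
    IsDist (mixUniform η Q) := by
  refine ⟨fun y => hη.trans (le_mixUniform hQ hη₁ y), ?_⟩
  simp only [_root_.mixUniform, Finset.sum_add_distrib, ← Finset.mul_sum, hQ.2,
    Finset.sum_const, Finset.card_univ, nsmul_eq_mul]
  ring

end Divergence

section Capacity

variable {𝒳 𝒴 : Type*} [Fintype 𝒳] [Fintype 𝒴]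

lemma capE_le_pseudoCapE (W : 𝒳 → 𝒴 → ℝ) (η : ℝ) : capE W ≤ pseudoCapE η W :=
  le_iInf₂ fun Q hQ => iInf₂_le Q hQ.1

lemma pseudoCapE_le_iSup_klE_add {W : 𝒳 → 𝒴 → ℝ} (hW : ∀ x, IsDist (W x)) {η : ℝ}
    (hη : 0 < η) (hη₁ : η * Fintype.card 𝒴 ≤ 1 / 2) {Q : 𝒴 → ℝ} (hQ : IsDist Q) :
    pseudoCapE η W ≤
      (⨆ x, klE (W x) Q) + ((2 * η * Fintype.card 𝒴 : ℝ) : EReal) := by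
  have hη₁' : η * Fintype.card 𝒴 ≤ 1 := by linarith
  have hshrink : ∀ x, klE (W x) (mixUniform η Q) ≤
      klE (W x) Q + ((2 * η * Fintype.card 𝒴 : ℝ) : EReal) := fun x => by
    refine (klE_le_add_neg_log_of_mul_le (hW x) hQ.1 (by linarith)
      (mul_le_mixUniform hη.le)).trans ?_
    gcongr
    rw [mul_assoc]
    exact neg_log_one_sub_le (by positivity) hη₁
  calc pseudoCapE η W ≤ ⨆ x, klE (W x) (mixUniform η Q) :=
        iInf₂_le _ ⟨hQ.mixUniform hη.le hη₁', le_mixUniform hQ hη₁'⟩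
    _ ≤ (⨆ x, klE (W x) Q) + ((2 * η * Fintype.card 𝒴 : ℝ) : EReal) :=
        iSup_le fun x => (hshrink x).trans (by gcongr; exact le_iSup (fun x => klE (W x) Q) x)

end Capacity

theorem stmt_1_general {𝒳 𝒴 : Type*} [Fintype 𝒳] [Fintype 𝒴]
    (W : 𝒳 → 𝒴 → ℝ) (hW : ∀ x, IsDist (W x))
    (η : ℝ) (hη : 0 < η) (hη' : η < 1 / (2 * Fintype.card 𝒴)) :
    capE W ≤ pseudoCapE η W ∧
      pseudoCapE η W ≤ capE W + ((2 * η * Fintype.card 𝒴 : ℝ) : EReal) := by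
  have hcard : (0 : ℝ) < 2 * Fintype.card 𝒴 := one_div_pos.mp (hη.trans hη')
  have hη₁ : η * Fintype.card 𝒴 ≤ 1 / 2 := by
    rw [lt_div_iff₀ hcard] at hη'
    linarith
  refine ⟨capE_le_pseudoCapE W η, ?_⟩
  rw [← EReal.sub_le_iff_le_add (.inl (EReal.coe_ne_bot _)) (.inl (EReal.coe_ne_top _))]
  exact le_iInf₂ fun Q hQ => EReal.sub_le_of_le_add (pseudoCapE_le_iSup_klE_add hW hη hη₁ hQ)

/-- `0 ≤ C_η(W) − C(W) ≤ 2η|𝒴|` for `η ∈ (0, 1/(2|𝒴|))`,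
stated as the pair of inequalities `C(W) ≤ C_η(W)` and `C_η(W) ≤ C(W) + 2η|𝒴|`. -/
theorem stmt_1 {𝒳 𝒴 : Type*} [Fintype 𝒳] [Nonempty 𝒳] [Fintype 𝒴] [Nonempty 𝒴]
    (W : 𝒳 → 𝒴 → ℝ) (hW : ∀ x, IsDist (W x))
    (η : ℝ) (hη : 0 < η) (hη' : η < 1 / (2 * Fintype.card 𝒴)) :
    capE W ≤ pseudoCapE η W ∧
      pseudoCapE η W ≤ capE W + ((2 * η * Fintype.card 𝒴 : ℝ) : EReal) :=
  stmt_1_general W hW η hη hη'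
end

section
/- Let 𝒴 be a finite alphabet with |𝒴| ≥ 2, let η ∈ (0,1] and κ ∈ (0,2]. Let Q ∈ 𝒫_η(𝒴) and let P, P̂ be probability distributions on 𝒴 with d_TV(P̂, P) ≤ κ. Then |D(P̂‖Q) − D(P‖Q)| ≤ (κ/2)·log(2e|𝒴|/(η²κ)); in particular both divergences are finite. -/
/-- Total variation distance (unnormalized ℓ₁ distance, valued in [0,2]). -/
noncomputable def dTV {𝒴 : Type*} [Fintype 𝒴] (P Q : 𝒴 → ℝ) : ℝ :=
  ∑ y, |P y - Q y|

lemma aux_log_div (p q : ℝ) (hp : 0 ≤ p) (hq : 0 < q) :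
    p * Real.log (p / q) = p * Real.log p - p * Real.log q := by
  rcases hp.eq_or_lt with h | h
  · simp [← h]
  · rw [Real.log_div h.ne' hq.ne', mul_sub]

/-- Per-coordinate entropy-difference bound:
`a log a − b log b ≤ −(b−a)⁺ log (b−a)⁺ + (a−b)⁺`. -/
lemma aux_ent_diff (a b : ℝ) (ha : 0 ≤ a) (ha1 : a ≤ 1) (hb : 0 ≤ b) :
    a * Real.log a - b * Real.log b ≤
      -(max (b - a) 0 * Real.log (max (b - a) 0)) + max (a - b) 0 := by
  rcases le_total a b with hab | hab
  · have h1 : max (a - b) 0 = 0 := max_eq_right (by linarith)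
    have h2 : max (b - a) 0 = b - a := max_eq_left (by linarith)
    rw [h1, h2, add_zero]
    rcases ha.eq_or_lt with h | hapos
    · simp [← h]
    rcases (sub_nonneg.mpr hab).eq_or_lt with h | hspos
    · have hba : b = a := by linarith
      subst hba; simp
    · have l1 : Real.log a ≤ Real.log b := Real.log_le_log hapos hab
      have l2 : Real.log (b - a) ≤ Real.log b := Real.log_le_log hspos (by linarith)
      nlinarith [mul_le_mul_of_nonneg_left l1 ha, mul_le_mul_of_nonneg_left l2 (le_of_lt hspos)]
  · have h1 : max (a - b) 0 = a - b := max_eq_left (by linarith)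
    have h2 : max (b - a) 0 = 0 := max_eq_right (by linarith)
    rw [h1, h2]
    simp only [Real.log_zero, mul_zero, neg_zero, zero_add]
    rcases hb.eq_or_lt with h | hbpos
    · have hloga : Real.log a ≤ 0 := Real.log_nonpos ha ha1
      rw [← h]
      nlinarith
    · -- a log a - b log b ≤ a - b
      have hloga : Real.log a ≤ 0 := Real.log_nonpos ha ha1
      have l1 : a * Real.log a ≤ b * Real.log a := by nlinarith
      have l2 : Real.log a - Real.log b ≤ a / b - 1 := by
        have := Real.log_le_sub_one_of_pos (show 0 < a / b from
          div_pos (lt_of_lt_of_le hbpos hab) hbpos)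
        rwa [Real.log_div (show (0:ℝ) < a from lt_of_lt_of_le hbpos hab).ne' hbpos.ne'] at this
      have l3 : b * (Real.log a - Real.log b) ≤ b * (a / b - 1) :=
        mul_le_mul_of_nonneg_left l2 hb
      have : b * (a / b - 1) = a - b := by field_simp
      nlinarith

/-- "Jensen" via `log t ≤ t − 1`: nonnegative `u` summing to `ε > 0` on `n` points
satisfy `∑ −u log u ≤ ε log (n/ε)`. -/
lemma aux_sum_ent {𝒴 : Type*} [Fintype 𝒴] (u : 𝒴 → ℝ) (hu : ∀ y, 0 ≤ u y)
    (ε : ℝ) (hε : 0 < ε) (hsum : ∑ y, u y = ε) :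
    ∑ y, -(u y * Real.log (u y)) ≤ ε * Real.log ((Fintype.card 𝒴 : ℝ) / ε) := by
  set n : ℝ := (Fintype.card 𝒴 : ℝ) with hn
  have hcard : 0 < Fintype.card 𝒴 := by
    rcases Nat.eq_zero_or_pos (Fintype.card 𝒴) with h | h
    · exfalso
      have hie : IsEmpty 𝒴 := Fintype.card_eq_zero_iff.mp h
      rw [Finset.univ_eq_empty, Finset.sum_empty] at hsum
      exact absurd hsum (ne_of_lt hε)
    · exact h
  have hnpos : 0 < n := by rw [hn]; exact_mod_cast hcard
  have key : ∀ y, -(u y * Real.log (u y)) ≤ u y * Real.log (n / ε) + (ε / n - u y) := by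
    intro y
    rcases (hu y).eq_or_lt with h | hpos
    · rw [← h]; simpa using (by positivity : (0:ℝ) ≤ ε / n)
    · have h1 : Real.log (ε / (n * u y)) ≤ ε / (n * u y) - 1 :=
        Real.log_le_sub_one_of_pos (by positivity)
      have h2 : Real.log (ε / (n * u y)) = Real.log ε - Real.log n - Real.log (u y) := by
        rw [Real.log_div hε.ne' (by positivity), Real.log_mul hnpos.ne' hpos.ne']
        ring
      have h3 : Real.log (n / ε) = Real.log n - Real.log ε :=
        Real.log_div hnpos.ne' hε.ne'
      have h4 : u y * Real.log (ε / (n * u y)) ≤ u y * (ε / (n * u y) - 1) :=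
        mul_le_mul_of_nonneg_left h1 (le_of_lt hpos)
      have h5 : u y * (ε / (n * u y)) = ε / n := by field_simp
      nlinarith
  calc ∑ y, -(u y * Real.log (u y)) ≤ ∑ y, (u y * Real.log (n / ε) + (ε / n - u y)) :=
        Finset.sum_le_sum fun y _ => key y
    _ = ε * Real.log (n / ε) + ((Fintype.card 𝒴 : ℝ) * (ε / n) - ε) := by
        rw [Finset.sum_add_distrib, ← Finset.sum_mul, hsum, Finset.sum_sub_distrib, hsum,
          Finset.sum_const, Finset.card_univ, nsmul_eq_mul]
    _ = ε * Real.log (n / ε) := by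
        rw [← hn, mul_div_cancel₀ _ hnpos.ne']
        ring

/-- Monotonicity of `x ↦ x log (C/x)`. -/
lemma aux_mono (C x y : ℝ) (hx : 0 < x) (hxy : x ≤ y) (hC : Real.exp 1 ≤ C / y) :
    x * Real.log (C / x) ≤ y * Real.log (C / y) := by
  have hy : 0 < y := lt_of_lt_of_le hx hxy
  have hCy : 0 < C / y := lt_of_lt_of_le (Real.exp_pos 1) hC
  have hCpos : 0 < C := by
    have := mul_pos hCy hy
    rwa [div_mul_cancel₀] at this
    exact hy.ne'
  have hlog1 : 1 ≤ Real.log (C / y) := by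
    rw [Real.le_log_iff_exp_le hCy]; exact hC
  have hsplit : Real.log (C / x) = Real.log (C / y) + Real.log (y / x) := by
    rw [Real.log_div hCpos.ne' hx.ne', Real.log_div hCpos.ne' hy.ne',
        Real.log_div hy.ne' hx.ne']
    ring
  have h1 : x * Real.log (y / x) ≤ y - x := by
    have := Real.log_le_sub_one_of_pos (show 0 < y / x from div_pos hy hx)
    have h2 := mul_le_mul_of_nonneg_left this hx.le
    have : x * (y / x - 1) = y - x := by field_simp
    nlinarith
  have h3 : y - x ≤ (y - x) * Real.log (C / y) := by nlinarith
  nlinarith [hsplit]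

set_option maxHeartbeats 1600000 in
/-- for `Q ∈ 𝒫_η(𝒴)` with `η ∈ (0,1]`, and distributions `P, P̂`
with `d_TV(P̂,P) ≤ κ ∈ (0,2]`, both divergences are finite and
`|D(P̂‖Q) − D(P‖Q)| ≤ (κ/2)·log(2e|𝒴|/(η²κ))`. -/
theorem stmt_4 {𝒴 : Type*} [Fintype 𝒴] (h𝒴 : 2 ≤ Fintype.card 𝒴)
    (η κ : ℝ) (hη0 : 0 < η) (hη1 : η ≤ 1) (hκ0 : 0 < κ) (hκ2 : κ ≤ 2)
    (Q : 𝒴 → ℝ) (hQ : IsDist Q ∧ ∀ y, η ≤ Q y)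
    (P Phat : 𝒴 → ℝ) (hP : IsDist P) (hPhat : IsDist Phat)
    (hTV : dTV Phat P ≤ κ) :
    klE Phat Q ≠ ⊤ ∧ klE P Q ≠ ⊤ ∧
      |klR Phat Q - klR P Q| ≤
        κ / 2 * Real.log (2 * Real.exp 1 * Fintype.card 𝒴 / (η ^ 2 * κ)) := by
  obtain ⟨⟨hQ0, hQ1⟩, hQη⟩ := hQ
  obtain ⟨hP0, hP1⟩ := hP
  obtain ⟨hPh0, hPh1⟩ := hPhat
  have hQpos : ∀ y, 0 < Q y := fun y => lt_of_lt_of_le hη0 (hQη y)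
  have habs : ∀ y, Q y = 0 → P y = 0 := fun y h => absurd h (hQpos y).ne'
  have habs' : ∀ y, Q y = 0 → Phat y = 0 := fun y h => absurd h (hQpos y).ne'
  refine ⟨?_, ?_, ?_⟩
  · unfold klE; rw [if_pos habs']; exact EReal.coe_ne_top _
  · unfold klE; rw [if_pos habs]; exact EReal.coe_ne_top _
  set n : ℝ := (Fintype.card 𝒴 : ℝ) with hn
  have hn2 : (2 : ℝ) ≤ n := by rw [hn]; exact_mod_cast h𝒴
  have hnpos : (0 : ℝ) < n := by linarith
  have hQle1 : ∀ y, Q y ≤ 1 := by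
    intro y
    calc Q y ≤ ∑ z, Q z := Finset.single_le_sum (fun z _ => hQ0 z) (Finset.mem_univ y)
      _ = 1 := hQ1
  have hPle1 : ∀ y, P y ≤ 1 := by
    intro y
    calc P y ≤ ∑ z, P z := Finset.single_le_sum (fun z _ => hP0 z) (Finset.mem_univ y)
      _ = 1 := hP1
  have hPhle1 : ∀ y, Phat y ≤ 1 := by
    intro y
    calc Phat y ≤ ∑ z, Phat z := Finset.single_le_sum (fun z _ => hPh0 z) (Finset.mem_univ y)
      _ = 1 := hPh1
  set δ : ℝ := dTV Phat P with hδ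
  have hδ0 : 0 ≤ δ := Finset.sum_nonneg fun y _ => abs_nonneg _
  -- RHS log is of a number ≥ 1
  have hargRHS : (1 : ℝ) ≤ 2 * Real.exp 1 * n / (η ^ 2 * κ) := by
    have he : (1 : ℝ) ≤ Real.exp 1 := by
      have := Real.add_one_le_exp (1 : ℝ); linarith
    have hden : η ^ 2 * κ ≤ 2 := by nlinarith
    have hdenpos : 0 < η ^ 2 * κ := by positivity
    rw [le_div_iff₀ hdenpos]
    nlinarith
  rcases hδ0.eq_or_lt with hδz | hδpos
  · -- δ = 0 : Phat = P
    have : ∀ y, Phat y = P y := by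
      intro y
      have h := (Finset.sum_eq_zero_iff_of_nonneg (fun z _ => abs_nonneg (Phat z - P z))).mp
        hδz.symm y (Finset.mem_univ y)
      have := abs_eq_zero.mp h
      linarith
    have heq : klR Phat Q = klR P Q := by
      unfold klR; exact Finset.sum_congr rfl fun y _ => by rw [this y]
    rw [heq, sub_self, abs_zero]
    have := Real.log_nonneg hargRHS
    positivity
  -- main case: δ > 0
  set ε : ℝ := δ / 2 with hε
  have hεpos : 0 < ε := by positivity
  set u : 𝒴 → ℝ := fun y => max (Phat y - P y) 0 with hu
  set v : 𝒴 → ℝ := fun y => max (P y - Phat y) 0 with hv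
  have huv_add : ∀ y, u y + v y = |Phat y - P y| := by
    intro y
    rcases le_total (P y) (Phat y) with h | h
    · rw [abs_of_nonneg (by linarith)]
      simp only [hu, hv, max_eq_left (by linarith : (0:ℝ) ≤ Phat y - P y),
        max_eq_right (by linarith : P y - Phat y ≤ 0)]
      ring
    · rw [abs_of_nonpos (by linarith)]
      simp only [hu, hv, max_eq_right (by linarith : Phat y - P y ≤ 0),
        max_eq_left (by linarith : (0:ℝ) ≤ P y - Phat y)]
      ring
  have huv_sub : ∀ y, u y - v y = Phat y - P y := by
    intro y
    rcases le_total (P y) (Phat y) with h | h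
    · simp only [hu, hv, max_eq_left (by linarith : (0:ℝ) ≤ Phat y - P y),
        max_eq_right (by linarith : P y - Phat y ≤ 0)]
      ring
    · simp only [hu, hv, max_eq_right (by linarith : Phat y - P y ≤ 0),
        max_eq_left (by linarith : (0:ℝ) ≤ P y - Phat y)]
      linarith
  have hsum_diff : ∑ y, (Phat y - P y) = 0 := by
    rw [Finset.sum_sub_distrib, hPh1, hP1, sub_self]
  have hsum_uv : ∑ y, (u y + v y) = δ := by
    have h := Finset.sum_congr rfl fun y (_ : y ∈ Finset.univ) => huv_add y
    rw [h, hδ]; rfl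
  have hsum_uv' : ∑ y, (u y - v y) = 0 := by
    rw [← hsum_diff]; exact Finset.sum_congr rfl fun y _ => huv_sub y
  have hsumu : ∑ y, u y = ε := by
    have h1 : ∑ y, u y + ∑ y, v y = δ := by rw [← Finset.sum_add_distrib]; exact hsum_uv
    have h2 : ∑ y, u y - ∑ y, v y = 0 := by rw [← Finset.sum_sub_distrib]; exact hsum_uv'
    rw [hε]; linarith
  have hsumv : ∑ y, v y = ε := by
    have h1 : ∑ y, u y + ∑ y, v y = δ := by rw [← Finset.sum_add_distrib]; exact hsum_uv
    rw [hε]; linarith [hsumu]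
  have hu0 : ∀ y, 0 ≤ u y := fun y => le_max_right _ _
  have hv0 : ∀ y, 0 ≤ v y := fun y => le_max_right _ _
  -- Decompose klR
  have hklR : ∀ (R : 𝒴 → ℝ), (∀ y, 0 ≤ R y) →
      klR R Q = ∑ y, R y * Real.log (R y) - ∑ y, R y * Real.log (Q y) := by
    intro R hR
    unfold klR
    rw [← Finset.sum_sub_distrib]
    exact Finset.sum_congr rfl fun y _ => aux_log_div _ _ (hR y) (hQpos y)
  rw [hklR P hP0, hklR Phat hPh0]
  set S1 : ℝ := ∑ y, Phat y * Real.log (Phat y) with hS1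
  set S0 : ℝ := ∑ y, P y * Real.log (P y) with hS0
  set T : ℝ := ∑ y, (Phat y - P y) * Real.log (Q y) with hT
  have hTsub : (S1 - ∑ y, Phat y * Real.log (Q y)) - (S0 - ∑ y, P y * Real.log (Q y))
      = (S1 - S0) - T := by
    rw [hT]
    rw [Finset.sum_congr rfl fun y (_ : y ∈ Finset.univ) => sub_mul (Phat y) (P y) (Real.log (Q y)),
      Finset.sum_sub_distrib]
    ring
  rw [hTsub]
  -- bound |T|
  have hlogη : 0 ≤ -Real.log η := by
    have := Real.log_nonpos hη0.le hη1; linarith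
  have hTbound : |T| ≤ δ * (-Real.log η) := by
    calc |T| ≤ ∑ y, |(Phat y - P y) * Real.log (Q y)| := Finset.abs_sum_le_sum_abs _ _
      _ ≤ ∑ y, |Phat y - P y| * (-Real.log η) := by
          apply Finset.sum_le_sum
          intro y _
          rw [abs_mul]
          apply mul_le_mul_of_nonneg_left _ (abs_nonneg _)
          have h1 : Real.log (Q y) ≤ 0 := Real.log_nonpos (hQpos y).le (hQle1 y)
          have h2 : Real.log η ≤ Real.log (Q y) := Real.log_le_log hη0 (hQη y)
          rw [abs_of_nonpos h1]; linarith
      _ = δ * (-Real.log η) := by rw [← Finset.sum_mul, hδ]; rfl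
  -- bound |S1 - S0|
  have hentu : ∑ y, -(u y * Real.log (u y)) ≤ ε * Real.log (n / ε) :=
    aux_sum_ent u hu0 ε hεpos hsumu
  have hentv : ∑ y, -(v y * Real.log (v y)) ≤ ε * Real.log (n / ε) :=
    aux_sum_ent v hv0 ε hεpos hsumv
  have hSbound : |S1 - S0| ≤ ε * Real.log (n / ε) + ε := by
    rw [abs_le]
    constructor
    · -- S0 - S1 ≤ ..., i.e. -(S1 - S0) ≤ bound
      have h : S0 - S1 ≤ ∑ y, (-(u y * Real.log (u y)) + v y) := by
        rw [hS0, hS1, ← Finset.sum_sub_distrib]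
        apply Finset.sum_le_sum
        intro y _
        exact aux_ent_diff (P y) (Phat y) (hP0 y) (hPle1 y) (hPh0 y)
      rw [Finset.sum_add_distrib, hsumv] at h
      linarith
    · have h : S1 - S0 ≤ ∑ y, (-(v y * Real.log (v y)) + u y) := by
        rw [hS0, hS1, ← Finset.sum_sub_distrib]
        apply Finset.sum_le_sum
        intro y _
        exact aux_ent_diff (Phat y) (P y) (hPh0 y) (hPhle1 y) (hP0 y)
      rw [Finset.sum_add_distrib, hsumu] at h
      linarith
  -- combine
  have hδ2ε : δ = 2 * ε := by rw [hε]; ring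
  have hcomb : |S1 - S0 - T| ≤ ε * Real.log (Real.exp 1 * n / (η ^ 2 * ε)) := by
    have h1 : |S1 - S0 - T| ≤ |S1 - S0| + |T| := by
      simpa [sub_eq_add_neg] using abs_add_le (S1 - S0) (-T)
    have hlogsplit : Real.log (Real.exp 1 * n / (η ^ 2 * ε))
        = 1 + Real.log (n / ε) + 2 * (-Real.log η) := by
      rw [Real.log_div (by positivity) (by positivity), Real.log_mul (Real.exp_pos 1).ne'
        hnpos.ne', Real.log_mul (by positivity) hεpos.ne', Real.log_exp,
        Real.log_div hnpos.ne' hεpos.ne', Real.log_pow]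
      push_cast
      ring
    rw [hlogsplit]
    have := hTbound
    rw [hδ2ε] at this
    nlinarith [hεpos]
  have hεκ : ε ≤ κ / 2 := by rw [hε]; linarith
  have hfinal : ε * Real.log (Real.exp 1 * n / (η ^ 2 * ε))
      ≤ κ / 2 * Real.log (2 * Real.exp 1 * n / (η ^ 2 * κ)) := by
    have hCarg : Real.exp 1 * n / (η ^ 2 * ε) = (Real.exp 1 * n / η ^ 2) / ε := by
      field_simp
    have hCarg2 : (Real.exp 1 * n / η ^ 2) / (κ / 2) = 2 * Real.exp 1 * n / (η ^ 2 * κ) := by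
      field_simp
    rw [hCarg, ← hCarg2]
    apply aux_mono _ _ _ hεpos hεκ
    rw [hCarg2]
    have hη2 : η ^ 2 ≤ 1 := by nlinarith
    have hdenpos : 0 < η ^ 2 * κ := by positivity
    rw [le_div_iff₀ hdenpos]
    have hepos := (Real.exp_pos 1).le
    have h2 : η ^ 2 * κ ≤ 2 := by nlinarith
    nlinarith [mul_le_mul_of_nonneg_left h2 hepos, mul_le_mul_of_nonneg_left hn2 hepos,
      mul_nonneg hepos hnpos.le]
  linarith [hcomb, hfinal, abs_nonneg (S1 - S0 - T)]
end

section
/- Let 𝒴 be a nonempty finite alphabet, P a probability distribution on 𝒴, n a positive integer, and Y_1, …, Y_n i.i.d. random variables with law P. Let P̂ⁿ be the empirical distribution, P̂ⁿ(y) := |{i ∈ [n] : Y_i = y}|/n. Then E[d_TV(P̂ⁿ, P)] ≤ √((|𝒴|−1)/n). -/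
open MeasureTheory ProbabilityTheory

/-- Empirical distribution of `n` samples `Y 0, …, Y (n-1)`. -/
noncomputable def empDist {𝒴 : Type*} [Fintype 𝒴] [DecidableEq 𝒴] {n : ℕ}
    (Ys : Fin n → 𝒴) : 𝒴 → ℝ :=
  fun y => ((Finset.univ.filter fun i => Ys i = y).card : ℝ) / n
/-!
Each empirical frequency `P̂ⁿ(y)` is `1/n` times a sum of `n` independent Bernoulli(`P y`)
indicators, so it has mean `P y` and variance `P y (1 - P y) / n`; by Jensen its mean absolute
deviation is at most `√(P y (1 - P y) / n)`. Summing over `y` and applying Cauchy–Schwarz,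
`∑ √(P y (1 - P y)) ≤ √(|𝒴| (1 - ∑ P y²)) ≤ √(|𝒴| - 1)` because `∑ P y² ≥ 1 / |𝒴|`.
-/

open scoped ENNReal

theorem Real.sum_sqrt_le_sqrt_card_mul_sum {ι : Type*} (s : Finset ι) (f : ι → ℝ)
    (hf : ∀ i ∈ s, 0 ≤ f i) :
    ∑ i ∈ s, √(f i) ≤ √(s.card * ∑ i ∈ s, f i) := by
  refine Real.le_sqrt_of_sq_le ?_
  calc (∑ i ∈ s, √(f i)) ^ 2 ≤ s.card * ∑ i ∈ s, √(f i) ^ 2 := sq_sum_le_card_mul_sum_sq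
    _ = s.card * ∑ i ∈ s, f i := by
        rw [Finset.sum_congr rfl fun i hi => Real.sq_sqrt (hf i hi)]

theorem IsDist.le_one {𝒴 : Type*} [Fintype 𝒴] {P : 𝒴 → ℝ} (hP : IsDist P) (y : 𝒴) :
    P y ≤ 1 :=
  hP.2 ▸ Finset.single_le_sum (fun z _ => hP.1 z) (Finset.mem_univ y)

theorem IsDist.one_le_card_mul_sum_sq {𝒴 : Type*} [Fintype 𝒴] {P : 𝒴 → ℝ} (hP : IsDist P) :
    1 ≤ Fintype.card 𝒴 * ∑ y, P y ^ 2 := by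
  simpa [hP.2] using sq_sum_le_card_mul_sum_sq (s := Finset.univ) (f := P)

theorem IsDist.sum_sqrt_mul_one_sub_le {𝒴 : Type*} [Fintype 𝒴] {P : 𝒴 → ℝ} (hP : IsDist P) :
    ∑ y, √(P y * (1 - P y)) ≤ √(Fintype.card 𝒴 - 1) := by
  have hsum : ∑ y, P y * (1 - P y) = 1 - ∑ y, P y ^ 2 := by
    simp only [mul_one_sub, ← sq, Finset.sum_sub_distrib, hP.2]
  calc ∑ y, √(P y * (1 - P y)) ≤ √(Fintype.card 𝒴 * ∑ y, P y * (1 - P y)) :=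
        Real.sum_sqrt_le_sqrt_card_mul_sum _ _ fun y _ =>
          mul_nonneg (hP.1 y) (sub_nonneg.2 (hP.le_one y))
    _ ≤ √(Fintype.card 𝒴 - 1) := by
        rw [hsum, mul_one_sub]
        exact Real.sqrt_le_sqrt (by linarith [hP.one_le_card_mul_sum_sq])

theorem empDist_apply {𝒴 : Type*} [Fintype 𝒴] [DecidableEq 𝒴] {n : ℕ} (Ys : Fin n → 𝒴)
    (y : 𝒴) : empDist Ys y = (n : ℝ)⁻¹ * ∑ i, ({y} : Set 𝒴).indicator 1 (Ys i) := by
  rw [empDist, Finset.card_filter, div_eq_inv_mul]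
  push_cast
  simp [Set.indicator_apply]

theorem empDist_comp_eq {Ω 𝒴 : Type*} [Fintype 𝒴] [DecidableEq 𝒴] {n : ℕ}
    (Y : Fin n → Ω → 𝒴) (y : 𝒴) :
    (fun ω => empDist (fun i => Y i ω) y) =
      fun ω => (n : ℝ)⁻¹ * (∑ i, (Y i ⁻¹' {y}).indicator 1) ω := by
  ext ω
  simp only [empDist_apply, Finset.sum_apply]
  rfl

namespace ProbabilityTheory

variable {Ω : Type*} [MeasurableSpace Ω] {μ : Measure Ω} [IsProbabilityMeasure μ]

-- `Var[|Z|] ≥ 0` gives `(𝔼|Z|)² ≤ 𝔼[Z²]`; take `Z = X - 𝔼[X]`.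
theorem integral_abs_sub_integral_le_sqrt_variance {X : Ω → ℝ} (hX : MemLp X 2 μ) :
    ∫ ω, |X ω - μ[X]| ∂μ ≤ √(Var[X; μ]) := by
  have hZ : MemLp (fun ω => |X ω - μ[X]|) 2 μ := (hX.sub (memLp_const _)).abs
  refine Real.le_sqrt_of_sq_le ?_
  have h := variance_nonneg (fun ω => |X ω - μ[X]|) μ
  rw [variance_eq_sub hZ] at h
  rw [variance_eq_integral hX.aemeasurable]
  simpa [sq_abs] using h

theorem memLp_indicator_one {s : Set Ω} (hs : MeasurableSet s) (p : ℝ≥0∞) :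
    MemLp (s.indicator (1 : Ω → ℝ)) p μ :=
  (memLp_const 1).indicator hs

theorem variance_indicator_one {s : Set Ω} (hs : MeasurableSet s) :
    Var[s.indicator 1; μ] = μ.real s * (1 - μ.real s) := by
  have hsq : s.indicator (1 : Ω → ℝ) ^ 2 = s.indicator 1 := by
    ext ω; by_cases h : ω ∈ s <;> simp [h]
  rw [variance_eq_sub (memLp_indicator_one hs 2), hsq, integral_indicator_one hs]
  ring

theorem variance_sum_indicator_preimage {𝒴 ι : Type*} [MeasurableSpace 𝒴] {Y : ι → Ω → 𝒴}
    (hY : ∀ i, Measurable (Y i)) (hindep : iIndepFun Y μ) (s : Finset ι) {B : Set 𝒴}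
    (hB : MeasurableSet B) :
    Var[∑ i ∈ s, (Y i ⁻¹' B).indicator 1; μ] =
      ∑ i ∈ s, μ.real (Y i ⁻¹' B) * (1 - μ.real (Y i ⁻¹' B)) := by
  rw [IndepFun.variance_sum (X := fun i => (Y i ⁻¹' B).indicator 1)
    (fun i _ => memLp_indicator_one (hY i hB) 2)]
  · exact Finset.sum_congr rfl fun i _ => variance_indicator_one (hY i hB)
  · intro i _ j _ hij
    exact (hindep.indepFun hij).comp (measurable_one.indicator hB) (measurable_one.indicator hB)

section EmpiricalDistribution

variable {𝒴 : Type*} [Fintype 𝒴] [DecidableEq 𝒴] [MeasurableSpace 𝒴] [MeasurableSingletonClass 𝒴]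
  {n : ℕ} {Y : Fin n → Ω → 𝒴}

theorem memLp_empDist (hY : ∀ i, Measurable (Y i)) (y : 𝒴) :
    MemLp (fun ω => empDist (fun i => Y i ω) y) 2 μ := by
  rw [empDist_comp_eq]
  exact (memLp_finsetSum' Finset.univ fun i _ =>
    memLp_indicator_one (hY i (measurableSet_singleton y)) 2).const_mul _

theorem integral_empDist (hn : n ≠ 0) (hY : ∀ i, Measurable (Y i)) {y : 𝒴} {p : ℝ}
    (hp : ∀ i, μ.real (Y i ⁻¹' {y}) = p) :
    μ[fun ω => empDist (fun i => Y i ω) y] = p := by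
  simp_rw [empDist_comp_eq, Finset.sum_apply]
  rw [integral_const_mul, integral_finsetSum _ fun i _ =>
    (memLp_indicator_one (hY i (measurableSet_singleton y)) 1).integrable le_rfl]
  simp [integral_indicator_one (hY _ (measurableSet_singleton y)), hp, hn]

theorem variance_empDist (hY : ∀ i, Measurable (Y i)) (hindep : iIndepFun Y μ) {y : 𝒴}
    {p : ℝ} (hp : ∀ i, μ.real (Y i ⁻¹' {y}) = p) :
    Var[fun ω => empDist (fun i => Y i ω) y; μ] = p * (1 - p) / n := by
  rw [empDist_comp_eq, variance_const_mul,
    variance_sum_indicator_preimage hY hindep _ (measurableSet_singleton y)]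
  simp only [hp, Finset.sum_const, Finset.card_univ, Fintype.card_fin, nsmul_eq_mul]
  rcases eq_or_ne (n : ℝ) 0 with h | h
  · simp [h]
  · field_simp

theorem integral_abs_empDist_sub_le (hn : n ≠ 0) (hY : ∀ i, Measurable (Y i))
    (hindep : iIndepFun Y μ) {y : 𝒴} {p : ℝ} (hp : ∀ i, μ.real (Y i ⁻¹' {y}) = p) :
    ∫ ω, |empDist (fun i => Y i ω) y - p| ∂μ ≤ √(p * (1 - p) / n) := by
  have h := integral_abs_sub_integral_le_sqrt_variance (memLp_empDist (μ := μ) hY y)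
  rwa [integral_empDist hn hY hp, variance_empDist hY hindep hp] at h

end EmpiricalDistribution

end ProbabilityTheory

theorem stmt_7_general {𝒴 : Type*} [Fintype 𝒴] [DecidableEq 𝒴]
    [MeasurableSpace 𝒴] [MeasurableSingletonClass 𝒴]
    {Ω : Type*} [MeasurableSpace Ω] (μ : Measure Ω) [IsProbabilityMeasure μ]
    (P : 𝒴 → ℝ) (hP : IsDist P) (n : ℕ) (hn : 0 < n)
    (Y : Fin n → Ω → 𝒴) (hmeas : ∀ i, Measurable (Y i))
    (hindep : iIndepFun (m := fun _ : Fin n => ‹MeasurableSpace 𝒴›) Y μ)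
    (hlaw : ∀ i y, μ (Y i ⁻¹' {y}) = ENNReal.ofReal (P y)) :
    ∫ ω, dTV (empDist fun i => Y i ω) P ∂μ ≤
      Real.sqrt ((Fintype.card 𝒴 - 1) / n) := by
  have hlaw' : ∀ y i, μ.real (Y i ⁻¹' {y}) = P y := fun y i => by
    rw [measureReal_def, hlaw, ENNReal.toReal_ofReal (hP.1 y)]
  calc ∫ ω, dTV (empDist fun i => Y i ω) P ∂μ
      = ∑ y, ∫ ω, |empDist (fun i => Y i ω) y - P y| ∂μ :=
        integral_finsetSum _ fun y _ =>
          (((memLp_empDist hmeas y).integrable one_le_two).sub (integrable_const _)).abs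
    _ ≤ ∑ y, √(P y * (1 - P y) / n) := Finset.sum_le_sum fun y _ =>
        integral_abs_empDist_sub_le hn.ne' hmeas hindep (hlaw' y)
    _ = (∑ y, √(P y * (1 - P y))) / √n := by
        simp only [Real.sqrt_div' _ n.cast_nonneg, Finset.sum_div]
    _ ≤ √(Fintype.card 𝒴 - 1) / √n := by
        gcongr; exact hP.sum_sqrt_mul_one_sub_le
    _ = √((Fintype.card 𝒴 - 1) / n) := (Real.sqrt_div' _ n.cast_nonneg).symm

/-- if `Y₁, …, Yₙ` are i.i.d. with law `P` on a finite alphabet 𝒴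
and `P̂ⁿ` is the empirical distribution, then
`E[d_TV(P̂ⁿ, P)] ≤ √((|𝒴|−1)/n)`. -/
theorem stmt_7 {𝒴 : Type*} [Fintype 𝒴] [Nonempty 𝒴] [DecidableEq 𝒴]
    [MeasurableSpace 𝒴] [MeasurableSingletonClass 𝒴]
    {Ω : Type*} [MeasurableSpace Ω] (μ : Measure Ω) [IsProbabilityMeasure μ]
    (P : 𝒴 → ℝ) (hP : IsDist P) (n : ℕ) (hn : 0 < n)
    (Y : Fin n → Ω → 𝒴) (hmeas : ∀ i, Measurable (Y i))
    (hindep : iIndepFun (m := fun _ : Fin n => ‹MeasurableSpace 𝒴›) Y μ)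
    (hlaw : ∀ i y, μ (Y i ⁻¹' {y}) = ENNReal.ofReal (P y)) :
    ∫ ω, dTV (empDist fun i => Y i ω) P ∂μ ≤
      Real.sqrt ((Fintype.card 𝒴 - 1) / n) :=
  stmt_7_general μ P hP n hn Y hmeas hindep hlaw
end

section
/- Let 𝒴 be a nonempty finite alphabet, P a probability distribution on 𝒴, n a positive integer, Y_1, …, Y_n i.i.d. random variables with law P, and P̂ⁿ the empirical distribution P̂ⁿ(y) := |{i ∈ [n] : Y_i = y}|/n. Then for every α ∈ (0, 1/2], with probability at least 1−α, d_TV(P̂ⁿ, P) ≤ √(4|𝒴| log(1/α)/n). -/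
/-!
Since `P̂ⁿ` and `P` both have total mass one, `d_TV(P̂ⁿ, P) = 2 (P̂ⁿ(A) - P(A))` for the set
`A = {y | P(y) ≤ P̂ⁿ(y)}`. For a fixed `A`, `n (P̂ⁿ(A) - P(A))` is a sum of `n` independent
centred `[0,1]`-valued variables, so Hoeffding's inequality bounds the probability that it
reaches `n t / 2` by `exp (-n t² / 2)`. A union bound over the `2^|𝒴|` subsets of `𝒴` gives
failure probability at most `2^|𝒴| exp (-n t² / 2) = 2^|𝒴| α^(2|𝒴|) ≤ α` for
`t = √(4 |𝒴| log (1/α) / n)`, because `2 α² ≤ α` when `α ≤ 1/2`.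
-/

open MeasureTheory ProbabilityTheory

open Real Finset

lemma Finset.sum_abs_eq_two_mul_sum_filter_nonneg {ι : Type*} (s : Finset ι) {f : ι → ℝ}
    (hf : ∑ i ∈ s, f i = 0) : ∑ i ∈ s, |f i| = 2 * ∑ i ∈ s with 0 ≤ f i, f i := by
  have hsplit := sum_filter_add_sum_filter_not s (fun i => 0 ≤ f i) f
  have habs := sum_filter_add_sum_filter_not s (fun i => 0 ≤ f i) (fun i => |f i|)
  rw [sum_congr rfl fun i hi => abs_of_nonneg (mem_filter.mp hi).2,
    sum_congr rfl fun i hi => abs_of_neg (not_le.mp (mem_filter.mp hi).2),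
    sum_neg_distrib] at habs
  linarith

lemma exists_finset_dTV_eq {𝒴 : Type*} [Fintype 𝒴] {P Q : 𝒴 → ℝ} (h : ∑ y, Q y = ∑ y, P y) :
    ∃ A : Finset 𝒴, dTV Q P = 2 * ∑ y ∈ A, (Q y - P y) :=
  ⟨_, univ.sum_abs_eq_two_mul_sum_filter_nonneg (by rw [sum_sub_distrib, h, sub_self])⟩

section EmpiricalDistribution

variable {𝒴 : Type*} [Fintype 𝒴] [DecidableEq 𝒴] {n : ℕ} (Ys : Fin n → 𝒴)

lemma sum_indicator_eq_mul_sum_empDist (hn : n ≠ 0) (A : Finset 𝒴) :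
    ∑ i, (A : Set 𝒴).indicator 1 (Ys i) = (n : ℝ) * ∑ y ∈ A, empDist Ys y := by
  have hn' : (n : ℝ) ≠ 0 := Nat.cast_ne_zero.mpr hn
  simp only [empDist, mul_sum, mul_div_cancel₀ _ hn', Set.indicator_apply, mem_coe,
    Pi.one_apply, card_filter, Nat.cast_sum, Nat.cast_ite, Nat.cast_one, Nat.cast_zero]
  rw [sum_comm]
  exact sum_congr rfl fun i _ => (sum_ite_eq A (Ys i) fun _ => (1 : ℝ)).symm

lemma sum_empDist (hn : n ≠ 0) : ∑ y, empDist Ys y = 1 := by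
  have h := sum_indicator_eq_mul_sum_empDist Ys hn univ
  simp only [coe_univ, Set.indicator_univ, Pi.one_apply, sum_const, card_univ,
    Fintype.card_fin, nsmul_eq_mul, mul_one] at h
  exact (mul_eq_left₀ (Nat.cast_ne_zero.mpr hn)).mp h.symm

end EmpiricalDistribution

section

variable {Ω : Type*} [MeasurableSpace Ω] {μ : Measure Ω}

lemma measureReal_sum_sub_integral_ge_le [IsProbabilityMeasure μ] {ι : Type*} [Fintype ι]
    {X : ι → Ω → ℝ} (hindep : iIndepFun X μ) (hmeas : ∀ i, AEMeasurable (X i) μ)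
    (hX : ∀ i, ∀ᵐ ω ∂μ, X i ω ∈ Set.Icc 0 1) {ε : ℝ} (hε : 0 ≤ ε) :
    μ.real {ω | ε ≤ ∑ i, (X i ω - μ[X i])} ≤ exp (-2 * ε ^ 2 / Fintype.card ι) := by
  have hcentred : iIndepFun (fun i ω => X i ω - μ[X i]) μ :=
    hindep.comp (fun i (x : ℝ) => x - ∫ ω, X i ω ∂μ) fun _ => measurable_id.sub_const _
  have h := HasSubgaussianMGF.measure_sum_ge_le_of_iIndepFun hcentred
    (fun i _ => hasSubgaussianMGF_of_mem_Icc (hmeas i) (hX i)) hε (s := univ)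
  have hvar : 2 * ((∑ _i : ι, (‖(1 : ℝ) - 0‖₊ / 2) ^ 2 : NNReal) : ℝ) = Fintype.card ι / 2 := by
    simp only [sub_zero, nnnorm_one, one_div, inv_pow, sum_const, card_univ, nsmul_eq_mul,
      NNReal.coe_mul, NNReal.coe_natCast, NNReal.coe_inv, NNReal.coe_pow, NNReal.coe_ofNat]
    ring
  rw [hvar, div_div_eq_mul_div] at h
  exact h.trans_eq (by ring_nf)

variable {𝒴 : Type*} [MeasurableSpace 𝒴]

lemma measureReal_sum_indicator_sub_ge_le [IsProbabilityMeasure μ] {ι : Type*} [Fintype ι]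
    {Y : ι → Ω → 𝒴} (hmeas : ∀ i, Measurable (Y i)) (hindep : iIndepFun Y μ)
    {S : Set 𝒴} (hS : MeasurableSet S) {p : ℝ} (hp : ∀ i, μ.real (Y i ⁻¹' S) = p)
    {ε : ℝ} (hε : 0 ≤ ε) :
    μ.real {ω | ε ≤ ∑ i, (S.indicator 1 (Y i ω) - p)} ≤ exp (-2 * ε ^ 2 / Fintype.card ι) := by
  have hmean : ∀ i, μ[fun ω => S.indicator (1 : 𝒴 → ℝ) (Y i ω)] = p := fun i => by
    simp_rw [← Set.indicator_comp_right (g := 1) (Y i)]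
    rw [Pi.one_comp, integral_indicator_one (hmeas i hS), hp]
  have h := measureReal_sum_sub_integral_ge_le (X := fun i ω => S.indicator 1 (Y i ω))
    (hindep.comp (fun _ => S.indicator 1) fun _ => (measurable_const.indicator hS))
    (fun i => ((measurable_const.indicator hS).comp (hmeas i)).aemeasurable)
    (fun i => ae_of_all _ fun ω => ⟨Set.indicator_nonneg (fun _ _ => zero_le_one) _,
      Set.indicator_le_self' (fun _ _ => zero_le_one) _⟩) hε
  simpa only [hmean] using h

lemma measureReal_preimage_finset_eq_sum [MeasurableSingletonClass 𝒴] {Z : Ω → 𝒴}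
    (hZ : Measurable Z) {P : 𝒴 → ℝ} (hP : ∀ y, 0 ≤ P y)
    (hlaw : ∀ y, μ (Z ⁻¹' {y}) = ENNReal.ofReal (P y)) (A : Finset 𝒴) :
    μ.real (Z ⁻¹' A) = ∑ y ∈ A, P y := by
  rw [← sum_measureReal_preimage_singleton A (fun y _ => hZ (measurableSet_singleton y))
    (fun y _ => by simp [hlaw])]
  simp [measureReal_def, hlaw, hP]

lemma ofReal_one_sub_le_of_measureReal_compl_le [IsProbabilityMeasure μ] {s : Set Ω} {α : ℝ}
    (h : μ.real sᶜ ≤ α) : ENNReal.ofReal (1 - α) ≤ μ s := by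
  have hcover : 1 ≤ μ.real s + μ.real sᶜ := by
    simpa [Set.union_compl_self] using measureReal_union_le (μ := μ) s sᶜ
  exact ENNReal.ofReal_le_of_le_toReal (by rw [← measureReal_def]; linarith)

end

lemma exists_finset_of_lt_dTV_empDist {𝒴 : Type*} [Fintype 𝒴] [DecidableEq 𝒴] {n : ℕ}
    (Ys : Fin n → 𝒴) (hn : n ≠ 0) {P : 𝒴 → ℝ} (hP : ∑ y, P y = 1) {t : ℝ}
    (ht : t < dTV (empDist Ys) P) :
    ∃ A : Finset 𝒴, n * (t / 2) ≤ ∑ i, ((A : Set 𝒴).indicator 1 (Ys i) - ∑ y ∈ A, P y) := by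
  obtain ⟨A, hA⟩ := exists_finset_dTV_eq (Q := empDist Ys) (P := P) (by rw [sum_empDist Ys hn, hP])
  refine ⟨A, ?_⟩
  rw [sum_sub_distrib, sum_indicator_eq_mul_sum_empDist Ys hn, sum_const, card_univ,
    Fintype.card_fin, nsmul_eq_mul, ← mul_sub, ← sum_sub_distrib]
  exact mul_le_mul_of_nonneg_left (by linarith) (Nat.cast_nonneg n)

lemma two_pow_mul_exp_neg_le {α : ℝ} (hα0 : 0 < α) (hα1 : α ≤ 1 / 2) {k : ℕ} (hk : k ≠ 0) :
    (2 : ℝ) ^ k * exp (-(2 * k * log (1 / α))) ≤ α := by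
  have hexp : exp (-(2 * k * log (1 / α))) = (α ^ 2) ^ k := by
    have hlog : -(2 * k * log (1 / α)) = k * log (α ^ 2) := by
      rw [one_div, log_inv, log_pow]
      push_cast
      ring
    rw [hlog, exp_nat_mul, exp_log (by positivity)]
  calc (2 : ℝ) ^ k * exp (-(2 * k * log (1 / α))) = (2 * α ^ 2) ^ k := by rw [hexp, mul_pow]
    _ ≤ α ^ k := pow_le_pow_left₀ (by positivity) (by nlinarith) k
    _ ≤ α := pow_le_of_le_one hα0.le (by linarith) hk

/-- if `Y₁, …, Yₙ` are i.i.d. with law `P` on a finite alphabet 𝒴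
and `P̂ⁿ` is the empirical distribution, then for any `α ∈ (0,1/2]`, with
probability at least `1 − α`, `d_TV(P̂ⁿ, P) ≤ √(4|𝒴|·log(1/α)/n)`. -/
theorem stmt_8 {𝒴 : Type*} [Fintype 𝒴] [Nonempty 𝒴] [DecidableEq 𝒴]
    [MeasurableSpace 𝒴] [MeasurableSingletonClass 𝒴]
    {Ω : Type*} [MeasurableSpace Ω] (μ : Measure Ω) [IsProbabilityMeasure μ]
    (P : 𝒴 → ℝ) (hP : IsDist P) (n : ℕ) (hn : 0 < n)
    (Y : Fin n → Ω → 𝒴) (hmeas : ∀ i, Measurable (Y i))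
    (hindep : iIndepFun Y μ)
    (hlaw : ∀ i y, μ (Y i ⁻¹' {y}) = ENNReal.ofReal (P y))
    (α : ℝ) (hα0 : 0 < α) (hα1 : α ≤ 1 / 2) :
    ENNReal.ofReal (1 - α) ≤
      μ {ω | dTV (empDist fun i => Y i ω) P ≤
        Real.sqrt (4 * Fintype.card 𝒴 * Real.log (1 / α) / n)} := by
  obtain ⟨hPnn, hPsum⟩ := hP
  set k := Fintype.card 𝒴
  set t := sqrt (4 * k * log (1 / α) / n)
  have hexponent : -2 * (n * (t / 2)) ^ 2 / Fintype.card (Fin n) = -(2 * k * log (1 / α)) := by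
    have hL : 0 ≤ log (1 / α) := log_nonneg (by rw [le_div_iff₀ hα0]; linarith)
    rw [Fintype.card_fin, mul_pow, div_pow, sq_sqrt (by positivity)]
    field_simp
    ring
  have hbad : μ.real {ω | t < dTV (empDist fun i => Y i ω) P} ≤ α := calc
    _ ≤ μ.real (⋃ A : Finset 𝒴,
          {ω | n * (t / 2) ≤ ∑ i, ((A : Set 𝒴).indicator 1 (Y i ω) - ∑ y ∈ A, P y)}) :=
        measureReal_mono fun ω hω =>
          Set.mem_iUnion.mpr (exists_finset_of_lt_dTV_empDist _ hn.ne' hPsum hω)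
    _ ≤ ∑ A : Finset 𝒴,
          μ.real {ω | n * (t / 2) ≤ ∑ i, ((A : Set 𝒴).indicator 1 (Y i ω) - ∑ y ∈ A, P y)} :=
        measureReal_iUnion_fintype_le _
    _ ≤ ∑ _A : Finset 𝒴, exp (-(2 * k * log (1 / α))) := sum_le_sum fun A _ => hexponent ▸
        measureReal_sum_indicator_sub_ge_le hmeas hindep A.measurableSet
          (fun i => measureReal_preimage_finset_eq_sum (hmeas i) hPnn (hlaw i) A) (by positivity)
    _ = 2 ^ k * exp (-(2 * k * log (1 / α))) := by simp [k, Fintype.card_finset]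
    _ ≤ α := two_pow_mul_exp_neg_le hα0 hα1 Fintype.card_ne_zero
  apply ofReal_one_sub_le_of_measureReal_compl_le
  simpa only [Set.compl_ofPred, not_le] using hbad
end
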